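/- (Helstrom) Let ρ, σ be density matrices on ℂⁿ and p ∈ [0,1]. For any POVM element 0 ≤ M ≤ 1, the success probability p·Tr(Mρ) + (1−p)·Tr((1−M)σ) of discriminating ρ (prior p) from σ (prior 1−p) is at most ½(1 + ‖pρ − (1−p)σ‖₁), and this bound is achieved by taking M to be the projection onto the nonnegative eigenspace of pρ − (1−p)σ. -/

import Mathlib

open Matrix
open scoped ComplexOrder

/-- The trace norm `‖A‖₁ = Tr √(Aᴴ A)` of a complex matrix. -/
noncomputable def traceNorm {n : ℕ} (A : Matrix (Fin n) (Fin n) ℂ) : ℝ :=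
  ((((Matrix.posSemidef_conjTranspose_mul_self A).1.eigenvectorUnitary : Matrix (Fin n) (Fin n) ℂ) *
    diagonal (((↑) : ℝ → ℂ) ∘ Real.sqrt ∘ (Matrix.posSemidef_conjTranspose_mul_self A).1.eigenvalues) *
    (star (Matrix.posSemidef_conjTranspose_mul_self A).1.eigenvectorUnitary :
      Matrix (Fin n) (Fin n) ℂ)).trace).re

/-!
With `Δ = pρ − (1−p)σ` and `Tr σ = 1`, the success probability of `M` is `(1 − p) + Re Tr(MΔ)`.
Write `Δ = Δ⁺ − Δ⁻` with `Δ⁺, Δ⁻ ≥ 0`. For `0 ≤ M ≤ 1`,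
`Tr(MΔ) = Tr Δ⁺ − Tr((1 − M)Δ⁺) − Tr(MΔ⁻) ≤ Tr Δ⁺`, because the trace of a product of two
positive semidefinite matrices is nonnegative; the spectral projection `P` of `Δ` onto `[0, ∞)`
satisfies `PΔ = Δ⁺` and attains the bound. Finally `2Δ⁺ = Δ + |Δ|` and `‖Δ‖₁ = Tr |Δ|`.
-/

open scoped MatrixOrder

namespace Matrix

variable {n 𝕜 : Type*} [Fintype n] [RCLike 𝕜]

theorem PosSemidef.trace_mul_nonneg {M A : Matrix n n 𝕜} (hM : M.PosSemidef)
    (hA : A.PosSemidef) : 0 ≤ (M * A).trace := by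
  classical
  obtain ⟨B, rfl⟩ := CStarAlgebra.nonneg_iff_eq_star_mul_self.mp hA.nonneg
  rw [← Matrix.mul_assoc, trace_mul_comm, ← Matrix.mul_assoc]
  exact (hM.mul_mul_conjTranspose_same B).trace_nonneg

variable [DecidableEq n]

theorem trace_mul_le_trace_posPart {A M : Matrix n n 𝕜} (hA : IsSelfAdjoint A)
    (hM₀ : 0 ≤ M) (hM₁ : M ≤ 1) : (M * A).trace ≤ (A⁺).trace := by
  have hgap : (A⁺).trace - (M * A).trace = ((1 - M) * A⁺).trace + (M * A⁻).trace := by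
    nth_rw 2 [← CFC.posPart_sub_negPart A]
    simp only [Matrix.sub_mul, Matrix.mul_sub, Matrix.one_mul, trace_sub]
    ring
  have hgap_nonneg : 0 ≤ ((1 - M) * A⁺).trace + (M * A⁻).trace :=
    add_nonneg ((sub_nonneg.mpr hM₁).posSemidef.trace_mul_nonneg (CFC.posPart_nonneg A).posSemidef)
      (hM₀.posSemidef.trace_mul_nonneg (CFC.negPart_nonneg A).posSemidef)
  exact sub_nonneg.mp (hgap ▸ hgap_nonneg)

/-- The spectral projection of `A` onto `[0, ∞)` (zero if `A` is not self-adjoint). -/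
noncomputable def nonnegSpectralProj (A : Matrix n n 𝕜) : Matrix n n 𝕜 :=
  cfc (fun x : ℝ => if 0 ≤ x then (1 : ℝ) else 0) A

theorem isSelfAdjoint_nonnegSpectralProj (A : Matrix n n 𝕜) :
    IsSelfAdjoint (nonnegSpectralProj A) :=
  cfc_predicate _ A

theorem isIdempotentElem_nonnegSpectralProj (A : Matrix n n 𝕜) :
    IsIdempotentElem (nonnegSpectralProj A) := by
  rw [IsIdempotentElem, nonnegSpectralProj, ← cfc_mul _ _ A
    (A.finite_real_spectrum.continuousOn _) (A.finite_real_spectrum.continuousOn _)]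
  exact cfc_congr fun x _ => by split_ifs <;> simp

theorem nonnegSpectralProj_mul_self {A : Matrix n n 𝕜} (hA : IsSelfAdjoint A) :
    nonnegSpectralProj A * A = A⁺ := by
  nth_rw 2 [← cfc_id' ℝ A]
  rw [nonnegSpectralProj, ← cfc_mul _ _ A (A.finite_real_spectrum.continuousOn _),
    CFC.posPart_def, cfcₙ_eq_cfc]
  refine cfc_congr fun x _ => ?_
  split_ifs with hx
  · simp [hx]
  · simp [(not_le.mp hx).le]

theorem nonnegSpectralProj_sub_one_mul_self {A : Matrix n n 𝕜} (hA : IsSelfAdjoint A) :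
    (nonnegSpectralProj A - 1) * A = A⁻ := by
  rw [Matrix.sub_mul, Matrix.one_mul, nonnegSpectralProj_mul_self hA, sub_eq_iff_eq_add',
    ← sub_eq_iff_eq_add, CFC.posPart_sub_negPart A]

end Matrix

theorem traceNorm_eq_re_trace_abs {n : ℕ} (A : Matrix (Fin n) (Fin n) ℂ) :
    traceNorm A = (CFC.abs A).trace.re := by
  have hAA := posSemidef_conjTranspose_mul_self A
  rw [CFC.abs, star_eq_conjTranspose, CFC.sqrt_eq_real_sqrt _ hAA.nonneg, cfcₙ_eq_cfc,
    hAA.1.cfc_eq, IsHermitian.cfc, Unitary.conjStarAlgAut_apply]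
  rfl

theorem re_trace_posPart {n : ℕ} {A : Matrix (Fin n) (Fin n) ℂ} (hA : IsSelfAdjoint A) :
    (A⁺).trace.re = (A.trace.re + traceNorm A) / 2 := by
  have h : CFC.abs A + A = A⁺ + A⁺ := by rw [CFC.abs_add_self A, two_nsmul]
  have h_re := congr_arg (fun B => (trace B).re) h
  simp only [trace_add, Complex.add_re] at h_re
  rw [traceNorm_eq_re_trace_abs]
  linarith

theorem re_trace_smul_sub_smul {ι : Type*} [Fintype ι] (ρ σ : Matrix ι ι ℂ) (p : ℝ)
    (hρ1 : ρ.trace = 1) (hσ1 : σ.trace = 1) :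
    ((p : ℂ) • ρ - ((1 - p : ℝ) : ℂ) • σ).trace.re = 2 * p - 1 := by
  simp [trace_sub, hρ1, hσ1]
  ring

theorem success_prob_eq_add_re_trace_mul {ι : Type*} [Fintype ι] [DecidableEq ι]
    (ρ σ : Matrix ι ι ℂ) (p : ℝ) (M : Matrix ι ι ℂ) (hσ1 : σ.trace = 1) :
    p * ((M * ρ).trace).re + (1 - p) * (((1 - M) * σ).trace).re =
      (1 - p) + (M * ((p : ℂ) • ρ - ((1 - p : ℝ) : ℂ) • σ)).trace.re := by
  simp [Matrix.mul_sub, Matrix.sub_mul, trace_sub, hσ1]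
  ring

theorem helstrom_general {n : ℕ} (ρ σ : Matrix (Fin n) (Fin n) ℂ)
    (hρ : ρ.PosSemidef) (hρ1 : ρ.trace = 1)
    (hσ : σ.PosSemidef) (hσ1 : σ.trace = 1)
    (p : ℝ) :
    (∀ M : Matrix (Fin n) (Fin n) ℂ, M.PosSemidef → (1 - M).PosSemidef →
      p * ((M * ρ).trace).re + (1 - p) * (((1 - M) * σ).trace).re ≤
        (1 + traceNorm ((p : ℂ) • ρ - ((1 - p : ℝ) : ℂ) • σ)) / 2) ∧
    (∃ M₀ : Matrix (Fin n) (Fin n) ℂ, M₀ᴴ = M₀ ∧ M₀ * M₀ = M₀ ∧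
      (M₀ * ((p : ℂ) • ρ - ((1 - p : ℝ) : ℂ) • σ)).PosSemidef ∧
      ((M₀ - 1) * ((p : ℂ) • ρ - ((1 - p : ℝ) : ℂ) • σ)).PosSemidef ∧
      p * ((M₀ * ρ).trace).re + (1 - p) * (((1 - M₀) * σ).trace).re =
        (1 + traceNorm ((p : ℂ) • ρ - ((1 - p : ℝ) : ℂ) • σ)) / 2) := by
  set Δ := (p : ℂ) • ρ - ((1 - p : ℝ) : ℂ) • σ
  have hΔ : IsSelfAdjoint Δ :=
    .sub (.smul (Complex.conj_ofReal p) hρ.nonneg.isSelfAdjoint)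
      (.smul (Complex.conj_ofReal _) hσ.nonneg.isSelfAdjoint)
  have hoptimum : (1 - p) + (Δ⁺).trace.re = (1 + traceNorm Δ) / 2 := by
    rw [re_trace_posPart hΔ, re_trace_smul_sub_smul ρ σ p hρ1 hσ1]
    ring
  refine ⟨fun M hM hM1 => ?_, nonnegSpectralProj Δ, isSelfAdjoint_nonnegSpectralProj Δ,
    isIdempotentElem_nonnegSpectralProj Δ, ?_, ?_, ?_⟩
  · rw [success_prob_eq_add_re_trace_mul ρ σ p M hσ1, ← hoptimum]
    have hle := trace_mul_le_trace_posPart hΔ hM.nonneg hM1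
    linarith [(Complex.le_def.mp hle).1]
  · simpa only [nonnegSpectralProj_mul_self hΔ] using (CFC.posPart_nonneg Δ).posSemidef
  · simpa only [nonnegSpectralProj_sub_one_mul_self hΔ] using (CFC.negPart_nonneg Δ).posSemidef
  · rw [success_prob_eq_add_re_trace_mul ρ σ p _ hσ1, nonnegSpectralProj_mul_self hΔ, hoptimum]

/-- Helstrom's theorem: the success probability of discriminating the states
`ρ` (prior `p`) and `σ` (prior `1−p`) with a POVM element `0 ≤ M ≤ 1` is at
most `½(1 + ‖pρ − (1−p)σ‖₁)`, and the bound is achieved by the projection onto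
the nonnegative eigenspace of `Δ = pρ − (1−p)σ`. -/
theorem helstrom {n : ℕ} (ρ σ : Matrix (Fin n) (Fin n) ℂ)
    (hρ : ρ.PosSemidef) (hρ1 : ρ.trace = 1)
    (hσ : σ.PosSemidef) (hσ1 : σ.trace = 1)
    (p : ℝ) (hp : p ∈ Set.Icc (0 : ℝ) 1) :
    (∀ M : Matrix (Fin n) (Fin n) ℂ, M.PosSemidef → (1 - M).PosSemidef →
      p * ((M * ρ).trace).re + (1 - p) * (((1 - M) * σ).trace).re ≤
        (1 + traceNorm ((p : ℂ) • ρ - ((1 - p : ℝ) : ℂ) • σ)) / 2) ∧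
    (∃ M₀ : Matrix (Fin n) (Fin n) ℂ, M₀ᴴ = M₀ ∧ M₀ * M₀ = M₀ ∧
      (M₀ * ((p : ℂ) • ρ - ((1 - p : ℝ) : ℂ) • σ)).PosSemidef ∧
      ((M₀ - 1) * ((p : ℂ) • ρ - ((1 - p : ℝ) : ℂ) • σ)).PosSemidef ∧
      p * ((M₀ * ρ).trace).re + (1 - p) * (((1 - M₀) * σ).trace).re =
        (1 + traceNorm ((p : ℂ) • ρ - ((1 - p : ℝ) : ℂ) • σ)) / 2) :=
  helstrom_general ρ σ hρ hρ1 hσ hσ1 p
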